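/- Let m ≥ 3 be an integer and define I_m(δ) = sup_{x ∈ [0,π]} ∫₀^π K_m(x,y)·1_{|x−y|<δ}(y) dy for δ > 0. Then there exists a constant C > 0 such that for all δ ∈ (0,1), I_m(δ) ≤ C·δ·(1 − log δ). -/

import Mathlib

open Real MeasureTheory Set

noncomputable def Tconst : ℝ := ∑' k : ℕ, 1 / (5 * ((k : ℝ) + 1) ^ 3)

set_option maxHeartbeats 1000000 in
lemma Tsummable : Summable (fun k : ℕ => 1 / (5 * ((k : ℝ) + 1) ^ 3)) := by
  have h : Summable (fun n : ℕ => 1 / (n : ℝ) ^ 3) := by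
    rw [Real.summable_one_div_nat_pow]; norm_num
  have h2 : Summable (fun k : ℕ => 1 / (((k : ℕ) + 1 : ℕ) : ℝ) ^ 3) :=
    (summable_nat_add_iff 1).2 h
  exact (h2.mul_left (1 / 5 : ℝ)).congr (fun k => by push_cast; field_simp)

lemma Tnonneg : 0 ≤ Tconst := tsum_nonneg (fun k => by positivity)

lemma tsum_bound (m : ℕ) (hm : 3 ≤ m) (x y : ℝ) :
    |∑' k : ℕ, Real.sin (((k : ℝ) + 1) * x) * Real.sin (((k : ℝ) + 1) * y) /
        ((m : ℝ) ^ 2 * ((k : ℝ) + 1) ^ 3 - 4 * ((k : ℝ) + 1))| ≤ Tconst := by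
  set f : ℕ → ℝ := fun k => Real.sin (((k : ℝ) + 1) * x) * Real.sin (((k : ℝ) + 1) * y) /
        ((m : ℝ) ^ 2 * ((k : ℝ) + 1) ^ 3 - 4 * ((k : ℝ) + 1)) with hf
  have hb : ∀ k : ℕ, |f k| ≤ 1 / (5 * ((k : ℝ) + 1) ^ 3) := by
    intro k
    have hk1 : (1 : ℝ) ≤ (k : ℝ) + 1 := by
      have : (0:ℝ) ≤ (k:ℝ) := Nat.cast_nonneg k
      linarith
    have hm' : (9 : ℝ) ≤ (m : ℝ) ^ 2 := by
      have h3 : (3 : ℝ) ≤ (m : ℝ) := by exact_mod_cast hm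
      nlinarith
    have hcube : ((k : ℝ) + 1) ≤ ((k : ℝ) + 1) ^ 3 := by
      nlinarith [hk1, sq_nonneg ((k:ℝ) + 1), sq_nonneg ((k:ℝ))]
    have hden : 5 * ((k : ℝ) + 1) ^ 3 ≤ (m : ℝ) ^ 2 * ((k : ℝ) + 1) ^ 3 - 4 * ((k : ℝ) + 1) := by
      nlinarith
    have hdpos : (0 : ℝ) < 5 * ((k : ℝ) + 1) ^ 3 := by positivity
    have hnum : |Real.sin (((k : ℝ) + 1) * x) * Real.sin (((k : ℝ) + 1) * y)| ≤ 1 := by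
      rw [abs_mul]
      exact mul_le_one₀ (Real.abs_sin_le_one _) (abs_nonneg _) (Real.abs_sin_le_one _)
    rw [hf]
    simp only []
    rw [abs_div]
    have hdabs : |(m : ℝ) ^ 2 * ((k : ℝ) + 1) ^ 3 - 4 * ((k : ℝ) + 1)| =
        (m : ℝ) ^ 2 * ((k : ℝ) + 1) ^ 3 - 4 * ((k : ℝ) + 1) :=
      abs_of_pos (lt_of_lt_of_le hdpos hden)
    rw [hdabs]
    exact div_le_div₀ (by norm_num) hnum hdpos hden
  have habs : Summable (fun k => |f k|) :=
    Summable.of_nonneg_of_le (fun k => abs_nonneg _) hb Tsummable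
  calc |∑' k, f k| ≤ ∑' k, |f k| := by
        have := norm_tsum_le_tsum_norm (f := f) (by simpa [Real.norm_eq_abs] using habs)
        simpa [Real.norm_eq_abs] using this
    _ ≤ Tconst := Summable.tsum_le_tsum hb habs Tsummable

lemma log_ratio_bound {x y : ℝ} (hx : x ∈ Icc (0:ℝ) π) (hy : y ∈ Icc (0:ℝ) π) :
    1 / (2 * π) * Real.log ((1 - Real.cos (x + y)) / (1 - Real.cos (x - y))) ≤
      1 / π * (Real.log π - Real.log (x - y)) := by
  obtain ⟨hx0, hx1⟩ := hx
  obtain ⟨hy0, hy1⟩ := hy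
  have hπ := Real.pi_pos
  have hπ3 := Real.pi_gt_three
  rcases eq_or_ne y x with rfl | hne
  · simp only [sub_self, Real.cos_zero, div_zero, Real.log_zero, mul_zero, sub_zero]
    have : (0:ℝ) ≤ Real.log π := Real.log_nonneg (by linarith)
    positivity
  · have ht : x - y ≠ 0 := sub_ne_zero.2 (Ne.symm hne)
    have htle : |x - y| ≤ π := abs_le.2 ⟨by linarith, by linarith⟩
    have hD' : 2 * (x - y) ^ 2 ≤ π ^ 2 * (1 - Real.cos (x - y)) := by
      have h := Real.cos_le_one_sub_mul_cos_sq htle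
      have hπ2 : (0:ℝ) < π ^ 2 := by positivity
      have h2 := mul_le_mul_of_nonneg_left h hπ2.le
      have heq : π ^ 2 * (1 - 2 / π ^ 2 * (x - y) ^ 2) = π ^ 2 - 2 * (x - y) ^ 2 := by
        field_simp
      nlinarith
    have hDpos : 0 < 1 - Real.cos (x - y) := by
      have ht2 : 0 < (x - y) ^ 2 := by positivity
      nlinarith
    have hN2 : 1 - Real.cos (x + y) ≤ 2 := by linarith [Real.neg_one_le_cos (x + y)]
    have hNpos : 0 < 1 - Real.cos (x + y) := by
      have h1 : Real.cos (x + y) ≤ 1 := Real.cos_le_one _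
      have hlt : x + y < 2 * π := by
        rcases lt_or_eq_of_le (show x + y ≤ π + π by linarith) with h | h
        · linarith
        · exfalso
          have hxπ : x = π := by linarith
          have hyπ : y = π := by linarith
          exact hne (hyπ.trans hxπ.symm)
      have hne0 : x + y ≠ 0 := by
        intro h0
        have hx' : x = 0 := by linarith
        have hy' : y = 0 := by linarith
        exact hne (hy'.trans hx'.symm)
      have hne1 : Real.cos (x + y) ≠ 1 := fun h =>
        hne0 ((Real.cos_eq_one_iff_of_lt_of_lt (by linarith) hlt).1 h)
      have := lt_of_le_of_ne h1 hne1
      linarith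
    have ht2 : (0:ℝ) < (x - y) ^ 2 := by positivity
    have hquot : (1 - Real.cos (x + y)) / (1 - Real.cos (x - y)) ≤ π ^ 2 / (x - y) ^ 2 := by
      rw [div_le_div_iff₀ hDpos ht2]
      nlinarith [sq_nonneg (x - y)]
    have hlog : Real.log ((1 - Real.cos (x + y)) / (1 - Real.cos (x - y))) ≤
        Real.log (π ^ 2 / (x - y) ^ 2) :=
      Real.log_le_log (by positivity) hquot
    have hexp : Real.log (π ^ 2 / (x - y) ^ 2) = 2 * Real.log π - 2 * Real.log (x - y) := by
      rw [Real.log_div (by positivity) (by positivity), Real.log_pow, Real.log_pow]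
      push_cast; ring
    have h2π : (0:ℝ) < 1 / (2 * π) := by positivity
    calc 1 / (2 * π) * Real.log ((1 - Real.cos (x + y)) / (1 - Real.cos (x - y)))
        ≤ 1 / (2 * π) * (2 * Real.log π - 2 * Real.log (x - y)) := by
          apply mul_le_mul_of_nonneg_left _ h2π.le
          rw [← hexp]; exact hlog
      _ = 1 / π * (Real.log π - Real.log (x - y)) := by
          field_simp

/-- For an integer `m ≥ 3` and `x, y ∈ [0,π]` with `x ≠ y`, the kernel
`K_m(x,y) = (1/(2π))·log((1 − cos(x+y))/(1 − cos(x−y)))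
  + (6/π)·∑_{k=1}^∞ sin(kx)·sin(ky)/(m²k³ − 4k)`. -/
noncomputable def Kker (m : ℕ) (x y : ℝ) : ℝ :=
  1 / (2 * Real.pi) * Real.log ((1 - Real.cos (x + y)) / (1 - Real.cos (x - y))) +
    6 / Real.pi * ∑' k : ℕ,
      Real.sin (((k : ℝ) + 1) * x) * Real.sin (((k : ℝ) + 1) * y) /
        ((m : ℝ) ^ 2 * ((k : ℝ) + 1) ^ 3 - 4 * ((k : ℝ) + 1))

lemma Kker_le (m : ℕ) (hm : 3 ≤ m) {x y : ℝ} (hx : x ∈ Icc (0:ℝ) π) (hy : y ∈ Icc (0:ℝ) π) :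
    Kker m x y ≤ 1 / π * (Real.log π - Real.log (x - y)) + 6 / π * Tconst := by
  unfold Kker
  have h1 := log_ratio_bound hx hy
  have h2 : 6 / π * ∑' k : ℕ,
      Real.sin (((k : ℝ) + 1) * x) * Real.sin (((k : ℝ) + 1) * y) /
        ((m : ℝ) ^ 2 * ((k : ℝ) + 1) ^ 3 - 4 * ((k : ℝ) + 1)) ≤ 6 / π * Tconst := by
    apply mul_le_mul_of_nonneg_left _ (by positivity : (0:ℝ) ≤ 6 / π)
    exact le_trans (le_abs_self _) (tsum_bound m hm x y)
  exact add_le_add h1 h2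

lemma log_window {δ u : ℝ} (hδ0 : 0 < δ) (hδ1 : δ ≤ 1) (hu : |u| < δ) :
    -Real.log u ≤ -Real.log δ + 2 * δ ^ ((1:ℝ)/2) * |u| ^ (-(1:ℝ)/2) := by
  have hlogδ : Real.log δ ≤ 0 := Real.log_nonpos hδ0.le hδ1
  rcases eq_or_ne u 0 with rfl | hu0
  · rw [Real.log_zero, abs_zero, Real.zero_rpow (by norm_num : (-(1:ℝ)/2) ≠ 0)]
    simp only [neg_zero, mul_zero]
    linarith
  · have ha : 0 < |u| := abs_pos.2 hu0
    have hq : 0 < δ / |u| := by positivity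
    have hlog2 : Real.log (δ / |u|) ≤ 2 * (δ / |u|) ^ ((1:ℝ)/2) := by
      have h1 : Real.log ((δ / |u|) ^ ((1:ℝ)/2)) ≤ (δ / |u|) ^ ((1:ℝ)/2) - 1 :=
        Real.log_le_sub_one_of_pos (by positivity)
      rw [Real.log_rpow hq] at h1
      linarith
    have hsplit : (δ / |u|) ^ ((1:ℝ)/2) = δ ^ ((1:ℝ)/2) * |u| ^ (-(1:ℝ)/2) := by
      rw [Real.div_rpow hδ0.le (abs_nonneg u), show (-(1:ℝ)/2) = -((1:ℝ)/2) by ring,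
        Real.rpow_neg (abs_nonneg u), div_eq_mul_inv]
    have hlogdiv : Real.log (δ / |u|) = Real.log δ - Real.log |u| :=
      Real.log_div hδ0.ne' (ne_of_gt ha)
    rw [← Real.log_abs u]
    rw [hlogdiv, hsplit] at hlog2
    linarith

lemma abs_rpow_intervalIntegrable (c : ℝ) {δ : ℝ} (hδ : 0 < δ) :
    IntervalIntegrable (fun y => |c - y| ^ (-(1:ℝ)/2)) volume (c - δ) (c + δ) := by
  have h0 : IntervalIntegrable (fun t : ℝ => t ^ (-(1:ℝ)/2)) volume 0 δ :=
    intervalIntegral.intervalIntegrable_rpow' (by norm_num)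
  have h1 : IntervalIntegrable (fun t : ℝ => |t| ^ (-(1:ℝ)/2)) volume 0 δ := by
    rw [intervalIntegrable_iff] at h0 ⊢
    rw [uIoc_of_le hδ.le] at h0 ⊢
    exact h0.congr_fun (fun t ht => by rw [abs_of_pos ht.1]) measurableSet_Ioc
  have h2 : IntervalIntegrable (fun t : ℝ => |t| ^ (-(1:ℝ)/2)) volume (-δ) 0 := by
    have := (h1.comp_sub_left 0).symm
    simpa using this
  have h3 := h2.trans h1
  have h4 := (h3.comp_sub_left c).symm
  simpa [sub_neg_eq_add] using h4

lemma integral_abs_rpow_right (c : ℝ) {δ : ℝ} (hδ : 0 < δ) :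
    ∫ y in c..(c+δ), |c - y| ^ (-(1:ℝ)/2) = 2 * δ ^ ((1:ℝ)/2) := by
  have h1 : EqOn (fun y => |c - y| ^ (-(1:ℝ)/2)) (fun y => (y - c) ^ (-(1:ℝ)/2))
      (uIcc c (c+δ)) := by
    intro y hy
    rw [uIcc_of_le (by linarith)] at hy
    have : |c - y| = y - c := by
      rw [abs_sub_comm, abs_of_nonneg (by linarith [hy.1])]
    simp only [this]
  rw [intervalIntegral.integral_congr h1]
  have h2 := intervalIntegral.integral_comp_sub_right (a := c) (b := c + δ)
    (fun t : ℝ => t ^ (-(1:ℝ)/2)) c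
  simp only [sub_self, add_sub_cancel_left] at h2
  rw [h2, integral_rpow (Or.inl (by norm_num))]
  rw [Real.zero_rpow (by norm_num)]
  norm_num
  ring

lemma integral_abs_rpow_left (c : ℝ) {δ : ℝ} (hδ : 0 < δ) :
    ∫ y in (c-δ)..c, |c - y| ^ (-(1:ℝ)/2) = 2 * δ ^ ((1:ℝ)/2) := by
  have h1 : EqOn (fun y => |c - y| ^ (-(1:ℝ)/2)) (fun y => (c - y) ^ (-(1:ℝ)/2))
      (uIcc (c-δ) c) := by
    intro y hy
    rw [uIcc_of_le (by linarith)] at hy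
    have : |c - y| = c - y := abs_of_nonneg (by linarith [hy.2])
    simp only [this]
  rw [intervalIntegral.integral_congr h1]
  have h2 := intervalIntegral.integral_comp_sub_left (a := c - δ) (b := c)
    (fun t : ℝ => t ^ (-(1:ℝ)/2)) c
  simp only [sub_self, sub_sub_cancel] at h2
  rw [h2, integral_rpow (Or.inl (by norm_num))]
  rw [Real.zero_rpow (by norm_num)]
  norm_num
  ring

lemma integral_window (c A B : ℝ) {δ : ℝ} (hδ : 0 < δ) :
    ∫ y in (c-δ)..(c+δ), (A + B * |c - y| ^ (-(1:ℝ)/2)) = 2*δ*A + B * (4 * δ ^ ((1:ℝ)/2)) := by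
  have hIw := abs_rpow_intervalIntegrable c hδ
  have hIl : IntervalIntegrable (fun y => |c - y| ^ (-(1:ℝ)/2)) volume (c-δ) c := by
    apply hIw.mono_set
    rw [uIcc_of_le (by linarith : c - δ ≤ c), uIcc_of_le (by linarith : c - δ ≤ c + δ)]
    exact Icc_subset_Icc le_rfl (by linarith)
  have hIr : IntervalIntegrable (fun y => |c - y| ^ (-(1:ℝ)/2)) volume c (c+δ) := by
    apply hIw.mono_set
    rw [uIcc_of_le (by linarith : c ≤ c + δ), uIcc_of_le (by linarith : c - δ ≤ c + δ)]
    exact Icc_subset_Icc (by linarith) le_rfl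
  have hfl : IntervalIntegrable (fun y => A + B * |c - y| ^ (-(1:ℝ)/2)) volume (c-δ) c :=
    intervalIntegrable_const.add (hIl.const_mul B)
  have hfr : IntervalIntegrable (fun y => A + B * |c - y| ^ (-(1:ℝ)/2)) volume c (c+δ) :=
    intervalIntegrable_const.add (hIr.const_mul B)
  rw [← intervalIntegral.integral_add_adjacent_intervals hfl hfr]
  rw [intervalIntegral.integral_add intervalIntegrable_const (hIl.const_mul B),
    intervalIntegral.integral_add intervalIntegrable_const (hIr.const_mul B),
    intervalIntegral.integral_const_mul, intervalIntegral.integral_const_mul,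
    intervalIntegral.integral_const, intervalIntegral.integral_const,
    integral_abs_rpow_left c hδ, integral_abs_rpow_right c hδ]
  simp only [smul_eq_mul]
  ring

lemma arith_final (Q δ v P : ℝ) (hQ : 0 ≤ Q) (hδ0 : 0 < δ) (hv : 0 ≤ -v) (hP3 : P ≤ 1/3) :
    2 * δ * Q + 2 * P * δ * (-v) + 8 * δ * P ≤ (2 * Q + 10) * δ * (1 - v) := by
  nlinarith [mul_nonneg (mul_nonneg hQ hδ0.le) hv, mul_nonneg hδ0.le hv,
    mul_nonneg (sub_nonneg.2 hP3) (mul_nonneg hδ0.le hv),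
    mul_nonneg (sub_nonneg.2 hP3) hδ0.le]

lemma key (m : ℕ) (hm : 3 ≤ m) {x δ : ℝ} (hx : x ∈ Icc (0:ℝ) π) (hδ0 : 0 < δ) (hδ1 : δ < 1) :
    (∫ y in (0:ℝ)..π, Set.indicator {y : ℝ | |x - y| < δ} (fun y => Kker m x y) y) ≤
      (2 * (6 / π * Tconst + Real.log π / π) + 10) * δ * (1 - Real.log δ) := by
  have hπ := Real.pi_pos
  have hπ3 := Real.pi_gt_three
  have hlogδ : Real.log δ < 0 := Real.log_neg hδ0 hδ1
  have hlogπ : 0 ≤ Real.log π := Real.log_nonneg (by linarith)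
  have hT := Tnonneg
  have hQ : (0:ℝ) ≤ 6 / π * Tconst + Real.log π / π :=
    add_nonneg (mul_nonneg (by positivity) hT) (div_nonneg hlogπ hπ.le)
  have hC0 : (0:ℝ) ≤ 2 * (6 / π * Tconst + Real.log π / π) + 10 := by linarith
  have hRHS : (0:ℝ) ≤ (2 * (6 / π * Tconst + Real.log π / π) + 10) * δ * (1 - Real.log δ) :=
    mul_nonneg (mul_nonneg hC0 hδ0.le) (by linarith)
  set S := {y : ℝ | |x - y| < δ} with hSdef
  have hS : MeasurableSet S :=
    (isOpen_lt ((continuous_const.sub continuous_id).abs) continuous_const).measurableSet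
  set A := 6 / π * Tconst + 1 / π * (Real.log π - Real.log δ) with hA
  set B := 2 * δ ^ ((1:ℝ)/2) / π with hB
  have hA0 : 0 ≤ A := by
    rw [hA]
    exact add_nonneg (mul_nonneg (by positivity) hT)
      (mul_nonneg (by positivity) (by linarith))
  have hB0 : 0 ≤ B := by rw [hB]; positivity
  set φ : ℝ → ℝ := fun y => A + B * |x - y| ^ (-(1:ℝ)/2) with hφ
  have hφ0 : ∀ y, 0 ≤ φ y := fun y =>
    add_nonneg hA0 (mul_nonneg hB0 (Real.rpow_nonneg (abs_nonneg _) _))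
  have hsub : S ∩ Ioc 0 π ⊆ Ioc (x - δ) (x + δ) := by
    rintro y ⟨hy1, _⟩
    have h := abs_lt.1 (show |x - y| < δ from hy1)
    exact ⟨by linarith [h.2], by linarith [h.1]⟩
  have hφint : IntegrableOn φ (Ioc (x - δ) (x + δ)) volume := by
    have h' : IntegrableOn (fun y => |x - y| ^ (-(1:ℝ)/2)) (Ioc (x - δ) (x + δ)) volume :=
      (intervalIntegrable_iff_integrableOn_Ioc_of_le (by linarith)).1
        (abs_rpow_intervalIntegrable x hδ0)
    exact (integrableOn_const measure_Ioc_lt_top.ne).add (h'.const_mul B)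
  have hpt : ∀ y ∈ Icc (0:ℝ) π,
      S.indicator (fun y => Kker m x y) y ≤ S.indicator φ y := by
    intro y hy
    by_cases hyS : y ∈ S
    · rw [indicator_of_mem hyS, indicator_of_mem hyS]
      show Kker m x y ≤ A + B * |x - y| ^ (-(1:ℝ)/2)
      have h1 := Kker_le m hm hx hy
      have h2 := log_window hδ0 hδ1.le (show |x - y| < δ from hyS)
      have key0 : (A + B * |x - y| ^ (-(1:ℝ)/2)) -
          (1 / π * (Real.log π - Real.log (x - y)) + 6 / π * Tconst) =
          1 / π * ((-Real.log δ + 2 * δ ^ ((1:ℝ)/2) * |x - y| ^ (-(1:ℝ)/2)) -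
            (-Real.log (x - y))) := by
        rw [hA, hB]
        ring
      have h3 := mul_nonneg (show (0:ℝ) ≤ 1 / π by positivity) (sub_nonneg.2 h2)
      linarith
    · rw [indicator_of_notMem hyS, indicator_of_notMem hyS]
  by_cases hint : IntervalIntegrable (S.indicator (fun y => Kker m x y)) volume 0 π
  case neg => rw [intervalIntegral.integral_undef hint]; exact hRHS
  case pos =>
  have hφI : IntervalIntegrable (S.indicator φ) volume 0 π := by
    rw [intervalIntegrable_iff_integrableOn_Ioc_of_le Real.pi_pos.le]
    apply (integrable_indicator_iff hS).2
    rw [IntegrableOn, Measure.restrict_restrict hS]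
    exact hφint.mono_set hsub
  have step1 := intervalIntegral.integral_mono_on Real.pi_pos.le hint hφI hpt
  have step2 : (∫ y in (0:ℝ)..π, S.indicator φ y) ≤ ∫ y in Ioc (x - δ) (x + δ), φ y := by
    rw [intervalIntegral.integral_of_le Real.pi_pos.le, integral_indicator hS,
      Measure.restrict_restrict hS]
    exact setIntegral_mono_set hφint (ae_of_all _ hφ0) hsub.eventuallyLE
  have step3 : (∫ y in Ioc (x - δ) (x + δ), φ y) = 2 * δ * A + B * (4 * δ ^ ((1:ℝ)/2)) := by
    rw [← intervalIntegral.integral_of_le (by linarith : x - δ ≤ x + δ)]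
    simp only [hφ]
    exact integral_window x A B hδ0
  have hhalf : δ ^ ((1:ℝ)/2) * δ ^ ((1:ℝ)/2) = δ := by
    rw [← Real.rpow_add hδ0]; norm_num
  have hfin : 2 * δ * A + B * (4 * δ ^ ((1:ℝ)/2)) ≤
      (2 * (6 / π * Tconst + Real.log π / π) + 10) * δ * (1 - Real.log δ) := by
    have hs : B * (4 * δ ^ ((1:ℝ)/2)) = 8 * δ * (1 / π) := by
      rw [hB]
      field_simp
      linear_combination 8 * hhalf
    have hexpand : 2 * δ * A =
        2 * δ * (6 / π * Tconst + Real.log π / π) +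
          2 * (1 / π) * δ * (-Real.log δ) := by
      rw [hA]; ring
    rw [hs, hexpand]
    have hP3 : 1 / π ≤ 1 / 3 := by
      rw [div_le_div_iff₀ hπ (by norm_num)]; linarith
    exact arith_final _ _ _ _ hQ hδ0 (by linarith) hP3
  linarith [step1, step2, step3 ▸ le_refl (∫ y in Ioc (x - δ) (x + δ), φ y)]

/-- `I_m(δ) = sup_{x ∈ [0,π]} ∫₀^π K_m(x,y)·1_{|x−y|<δ}(y) dy`. -/
noncomputable def Ical (m : ℕ) (δ : ℝ) : ℝ :=
  ⨆ x : Set.Icc (0:ℝ) Real.pi,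
    ∫ y in (0:ℝ)..Real.pi, Set.indicator {y : ℝ | |(x : ℝ) - y| < δ} (fun y => Kker m x y) y

/-- For `m ≥ 3` there is `C > 0` such that `I_m(δ) ≤ C·δ·(1 − log δ)` for all `δ ∈ (0,1)`. -/
theorem Ical_le (m : ℕ) (hm : 3 ≤ m) :
    ∃ C > 0, ∀ δ ∈ Set.Ioo (0:ℝ) 1, Ical m δ ≤ C * δ * (1 - Real.log δ) := by
  have hπ := Real.pi_pos
  have hπ3 := Real.pi_gt_three
  have hT := Tnonneg
  have hlogπ : 0 ≤ Real.log Real.pi := Real.log_nonneg (by linarith)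
  refine ⟨2 * (6 / Real.pi * Tconst + Real.log Real.pi / Real.pi) + 10, ?_, ?_⟩
  · have h1 : 0 ≤ 6 / Real.pi * Tconst := mul_nonneg (by positivity) hT
    have h2 : 0 ≤ Real.log Real.pi / Real.pi := div_nonneg hlogπ hπ.le
    linarith
  · rintro δ ⟨hδ0, hδ1⟩
    rw [Ical]
    haveI : Nonempty (Set.Icc (0:ℝ) Real.pi) := ⟨⟨0, Set.left_mem_Icc.2 Real.pi_pos.le⟩⟩
    apply ciSup_le
    rintro ⟨x, hx⟩
    exact key m hm hx hδ0 hδ1
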